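/- Let (A,d) be a dg-algebra such that the set of left regular homogeneous elements of ker(d) coincides with the set of right regular homogeneous elements of ker(d), and suppose (A,d) is a graded commutative dg-division algebra. Then either ker(d) is a field concentrated in degree 0, or ker(d) = K[X,X^{-1}] for some field K and a homogeneous element X of nonzero degree; and if K has characteristic different from 2, then X has even degree. -/

import Mathlib

open scoped TensorProduct

section DGCore

variable {A : Type} [Ring A] {B : Type} [Ring B]

/-- `(A, d)` together with the grading `𝒜` is a differential graded ring:
`d` is a square-zero additive endomorphism of degree `1` satisfying the graded
Leibniz rule. -/
structure IsDGRing (𝒜 : ℤ → AddSubgroup A) (d : A →+ A) : Prop where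
  d_sq : ∀ x, d (d x) = 0
  d_mem : ∀ (i : ℤ), ∀ x ∈ 𝒜 i, d x ∈ 𝒜 (i + 1)
  leibniz : ∀ (i : ℤ) (a b : A), a ∈ 𝒜 i →
    d (a * b) = d a * b + ((Int.negOnePow i : ℤ)) • (a * d b)

/-- A homomorphism of differential graded rings (a dg-extension). -/
structure IsDGHom (𝒜 : ℤ → AddSubgroup A) (dA : A →+ A)
    (𝒝 : ℤ → AddSubgroup B) (dB : B →+ B) (φ : A →+* B) : Prop where
  map_mem : ∀ (i : ℤ), ∀ x ∈ 𝒜 i, φ x ∈ 𝒝 i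
  map_d : ∀ x, φ (dA x) = dB (φ x)

/-- Graded commutativity: `a * b = (-1)^{|a||b|} b * a` for homogeneous elements. -/
def IsGradedComm (𝒜 : ℤ → AddSubgroup A) : Prop :=
  ∀ (i j : ℤ) (a b : A), a ∈ 𝒜 i → b ∈ 𝒜 j →
    a * b = ((Int.negOnePow (i * j) : ℤ)) • (b * a)

/-- A dg-ring is acyclic if its homology vanishes, i.e. every cycle is a boundary. -/
def IsAcyclic (d : A →+ A) : Prop := ∀ x, d x = 0 → ∃ y, d y = x

/-- A dg left ideal: a graded additive subgroup closed under the differential and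
under left multiplication. -/
def IsDGLeftIdeal (𝒜 : ℤ → AddSubgroup A) [GradedRing 𝒜] (d : A →+ A)
    (I : AddSubgroup A) : Prop :=
  (∀ (a : A), ∀ x ∈ I, a * x ∈ I) ∧ (∀ x ∈ I, d x ∈ I) ∧
    (∀ x ∈ I, ∀ i : ℤ, (DirectSum.decompose 𝒜 x i : A) ∈ I)

/-- A dg right ideal. -/
def IsDGRightIdeal (𝒜 : ℤ → AddSubgroup A) [GradedRing 𝒜] (d : A →+ A)
    (I : AddSubgroup A) : Prop :=
  (∀ (a : A), ∀ x ∈ I, x * a ∈ I) ∧ (∀ x ∈ I, d x ∈ I) ∧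
    (∀ x ∈ I, ∀ i : ℤ, (DirectSum.decompose 𝒜 x i : A) ∈ I)

/-- A dg-division ring: the only dg left ideals and the only dg right ideals
are `0` and the whole ring. -/
def IsDGDivisionRing (𝒜 : ℤ → AddSubgroup A) [GradedRing 𝒜] (d : A →+ A) : Prop :=
  (0 : A) ≠ 1 ∧ (∀ I, IsDGLeftIdeal 𝒜 d I → I = ⊥ ∨ I = ⊤) ∧
    (∀ I, IsDGRightIdeal 𝒜 d I → I = ⊥ ∨ I = ⊤)

/-- A graded division ring (gr-field): every nonzero homogeneous element is invertible. -/
def IsGradedDivisionRing (𝒜 : ℤ → AddSubgroup A) : Prop :=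
  (0 : A) ≠ 1 ∧ ∀ (i : ℤ) (x : A), x ∈ 𝒜 i → x ≠ 0 → IsUnit x

/-- The relations defining `B ⊗[A] B` inside `B ⊗[ℤ] B`, for an extension `φ : A →+* B`. -/
def sepRel (φ : A →+* B) : Submodule ℤ (B ⊗[ℤ] B) :=
  Submodule.span ℤ {x | ∃ (b b' : B) (a : A),
    x = (b * φ a) ⊗ₜ[ℤ] b' - b ⊗ₜ[ℤ] (φ a * b')}

/-- The balanced tensor product `B ⊗[A] B` for an extension `φ : A →+* B`. -/
abbrev SepTensor (φ : A →+* B) := (B ⊗[ℤ] B) ⧸ sepRel φ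

/-- The canonical projection `B ⊗[ℤ] B → B ⊗[A] B`. -/
noncomputable def sepMk (φ : A →+* B) : B ⊗[ℤ] B →ₗ[ℤ] SepTensor φ := (sepRel φ).mkQ

/-- The multiplication map `μ : B ⊗[A] B → B`. -/
noncomputable def sepMul (φ : A →+* B) : SepTensor φ →ₗ[ℤ] B :=
  Submodule.liftQ _ (TensorProduct.lift (LinearMap.mul ℤ B)) (by
    rw [sepRel, Submodule.span_le]
    rintro x ⟨b, b', a, rfl⟩
    change TensorProduct.lift (LinearMap.mul ℤ B) _ = 0
    erw [map_sub]
    simp [mul_assoc])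

/-- Left multiplication by `b` on `B ⊗[A] B`. -/
noncomputable def sepLMul (φ : A →+* B) (b : B) : SepTensor φ →ₗ[ℤ] SepTensor φ :=
  Submodule.mapQ _ _ (TensorProduct.map (LinearMap.mulLeft ℤ b) LinearMap.id) (by
    rw [sepRel, Submodule.span_le]
    rintro x ⟨b₀, b', a, rfl⟩
    simp only [SetLike.mem_coe, Submodule.mem_comap, map_sub, TensorProduct.map_tmul,
      LinearMap.mulLeft_apply, LinearMap.id_apply]
    refine Submodule.subset_span ⟨b * b₀, b', a, ?_⟩
    erw [map_sub, TensorProduct.map_tmul, TensorProduct.map_tmul]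
    simp [mul_assoc])

/-- Right multiplication by `b` on `B ⊗[A] B`. -/
noncomputable def sepRMul (φ : A →+* B) (b : B) : SepTensor φ →ₗ[ℤ] SepTensor φ :=
  Submodule.mapQ _ _ (TensorProduct.map LinearMap.id (LinearMap.mulRight ℤ b)) (by
    rw [sepRel, Submodule.span_le]
    rintro x ⟨b₀, b', a, rfl⟩
    simp only [SetLike.mem_coe, Submodule.mem_comap, map_sub, TensorProduct.map_tmul,
      LinearMap.mulRight_apply, LinearMap.id_apply]
    refine Submodule.subset_span ⟨b₀, b' * b, a, ?_⟩
    erw [map_sub, TensorProduct.map_tmul, TensorProduct.map_tmul]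
    simp [mul_assoc])

/-- The grading on `B ⊗[A] B`: the degree `n` part is generated by the classes of
`b ⊗ b'` with `b, b'` homogeneous of degrees summing to `n`. -/
noncomputable def sepGrading (φ : A →+* B) (𝒝 : ℤ → AddSubgroup B) (n : ℤ) :
    AddSubgroup (SepTensor φ) :=
  AddSubgroup.closure {x | ∃ (i j : ℤ) (b b' : B), b ∈ 𝒝 i ∧ b' ∈ 𝒝 j ∧ i + j = n ∧
    x = sepMk φ (b ⊗ₜ[ℤ] b')}

/-- The sign involution `b ↦ (-1)^{|b|} b` of a graded ring. -/
noncomputable def signMap (𝒝 : ℤ → AddSubgroup B) [GradedRing 𝒝] : B →+ B :=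
  (DirectSum.toAddMonoid fun i =>
      (smulAddHom ℤ B ((Int.negOnePow i : ℤ))).comp (𝒝 i).subtype).comp
    (DirectSum.decomposeAddEquiv 𝒝).toAddMonoidHom

lemma signMap_of_mem (𝒝 : ℤ → AddSubgroup B) [GradedRing 𝒝] {i : ℤ} {x : B}
    (hx : x ∈ 𝒝 i) : signMap 𝒝 x = ((Int.negOnePow i : ℤ)) • x := by
  classical
  unfold signMap
  simp only [AddMonoidHom.comp_apply, AddEquiv.coe_toAddMonoidHom,
    DirectSum.decomposeAddEquiv_apply, DirectSum.decompose_of_mem 𝒝 hx,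
    DirectSum.toAddMonoid_of]
  rfl

/-- The differential `d ⊗ 1 + ε ⊗ d` on `B ⊗[ℤ] B` (with Koszul sign). -/
noncomputable def sepDiffPre (𝒝 : ℤ → AddSubgroup B) [GradedRing 𝒝] (dB : B →+ B) :
    B ⊗[ℤ] B →ₗ[ℤ] B ⊗[ℤ] B :=
  TensorProduct.map dB.toIntLinearMap LinearMap.id +
    TensorProduct.map (signMap 𝒝).toIntLinearMap dB.toIntLinearMap

/-- `D` is the differential induced on `B ⊗[A] B` by `d_B ⊗ 1 + ε ⊗ d_B`. -/
def IsSepDiff (φ : A →+* B) (𝒝 : ℤ → AddSubgroup B) [GradedRing 𝒝] (dB : B →+ B)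
    (D : SepTensor φ →+ SepTensor φ) : Prop :=
  ∀ x : B ⊗[ℤ] B, D (sepMk φ x) = sepMk φ (sepDiffPre 𝒝 dB x)

/-- `ρ : B → B ⊗[A] B` is a `B`-`B`-bimodule section of the multiplication map. -/
def IsSepSection (φ : A →+* B) (ρ : B →+ SepTensor φ) : Prop :=
  (∀ b, sepMul φ (ρ b) = b) ∧
    (∀ (b₁ c b₂ : B), ρ (b₁ * c * b₂) = sepLMul φ b₁ (sepRMul φ b₂ (ρ c)))

/-- The extension `φ : A →+* B` is separable: the multiplication map
`B ⊗[A] B → B` splits as a bimodule map. -/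
def IsSeparableExt (φ : A →+* B) : Prop := ∃ ρ : B →+ SepTensor φ, IsSepSection φ ρ

/-- The extension `φ : A →+* B` of graded rings is graded-separable: the multiplication
map `B ⊗[A] B → B` splits as a map of graded bimodules. -/
def IsGrSeparable (φ : A →+* B) (𝒝 : ℤ → AddSubgroup B) : Prop :=
  ∃ ρ : B →+ SepTensor φ, IsSepSection φ ρ ∧
    ∀ (n : ℤ), ∀ b ∈ 𝒝 n, ρ b ∈ sepGrading φ 𝒝 n

/-- The dg-extension `φ : (A,d_A) →  (B,d_B)` is dg-separable: the multiplication map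
`B ⊗[A] B → B` splits as a map of differential graded bimodules. -/
def IsDGSeparable (φ : A →+* B) (𝒝 : ℤ → AddSubgroup B) [GradedRing 𝒝]
    (dB : B →+ B) : Prop :=
  ∃ D : SepTensor φ →+ SepTensor φ, IsSepDiff φ 𝒝 dB D ∧
    ∃ ρ : B →+ SepTensor φ, IsSepSection φ ρ ∧
      (∀ (n : ℤ), ∀ b ∈ 𝒝 n, ρ b ∈ sepGrading φ 𝒝 n) ∧
      (∀ b, D (ρ b) = ρ (dB b))

end DGCore

section Cycles

variable {A : Type} [Ring A] {B : Type} [Ring B]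

lemma IsDGRing.leibniz_total {𝒜 : ℤ → AddSubgroup A} [GradedRing 𝒜] {d : A →+ A}
    (h : IsDGRing 𝒜 d) (a b : A) :
    d (a * b) = d a * b + signMap 𝒜 a * d b := by
  induction a using DirectSum.Decomposition.inductionOn 𝒜 with
  | zero => simp
  | @homogeneous i x =>
      obtain ⟨x, hx⟩ := x
      rw [h.leibniz i x b hx, signMap_of_mem 𝒜 hx, smul_mul_assoc]
  | add a a' ha ha' =>
      rw [add_mul, map_add, ha, ha', map_add, map_add, add_mul, add_mul]
      abel

/-- The subring of cycles `ker d` of a dg-ring `(A, d)`. -/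
def cyclesSubring (𝒜 : ℤ → AddSubgroup A) [GradedRing 𝒜] (d : A →+ A)
    (h : IsDGRing 𝒜 d) : Subring A where
  carrier := {x | d x = 0}
  zero_mem' := map_zero d
  add_mem' := by
    intro x y hx hy
    simp only [Set.mem_setOf_eq] at *
    rw [map_add, hx, hy, add_zero]
  neg_mem' := by
    intro x hx
    simp only [Set.mem_setOf_eq] at *
    rw [map_neg, hx, neg_zero]
  one_mem' := by
    have h2 : d ((1 : A) * 1) = d 1 * 1 + ((Int.negOnePow 0 : ℤ)) • ((1 : A) * d 1) :=
      h.leibniz 0 1 1 (SetLike.one_mem_graded 𝒜)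
    simp only [one_mul, mul_one, Int.negOnePow_zero, Units.val_one, one_smul] at h2
    have h3 : d (1 : A) + 0 = d 1 + d 1 := by rw [add_zero]; exact h2
    exact (add_left_cancel h3).symm
  mul_mem' := by
    intro x y hx hy
    simp only [Set.mem_setOf_eq] at *
    rw [h.leibniz_total x y, hx, hy, zero_mul, mul_zero, add_zero]

/-- The grading on the subring of cycles, inherited from the ambient graded ring. -/
def cyclesGrading (𝒜 : ℤ → AddSubgroup A) [GradedRing 𝒜] (d : A →+ A)
    (h : IsDGRing 𝒜 d) : ℤ → AddSubgroup (cyclesSubring 𝒜 d h) :=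
  fun i => (𝒜 i).comap (cyclesSubring 𝒜 d h).subtype.toAddMonoidHom

end Cycles

section Laurent

/-- The degree-`n` homogeneous part of the Laurent polynomial ring `D[T,T⁻¹]`,
where the variable `T` is placed in degree `e`. -/
noncomputable def lpGrading (D : Type) [CommRing D] (e : ℤ) (n : ℤ) :
    AddSubgroup (LaurentPolynomial D) :=
  AddSubgroup.closure {x | ∃ (c : D) (k : ℤ), k * e = n ∧
    x = LaurentPolynomial.C c * LaurentPolynomial.T k}

end Laurent

/-! Every nonzero homogeneous cycle `x` generates the dg left ideal `A x`, which must be all of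
`A`; the homogeneous component of a left inverse of `x` is a homogeneous inverse, two-sided by
graded commutativity and again a cycle. So `ker d` is a graded-commutative graded division ring,
and the degrees of its nonzero homogeneous elements form a subgroup `e ℤ` of `ℤ`. If `e = 0` all
cycles have degree `0`. Otherwise, for a homogeneous unit `X` of degree `e`, substituting `T ↦ X`
identifies `K[T, T⁻¹]` with `ker d`, where `K` is the field of cycles of degree `0`; comparing
homogeneous components gives injectivity, and `a = (a X⁻ᵏ) Xᵏ` surjectivity. If `e` is odd,
graded commutativity gives `X² = -X²`, so `2 = 0`. -/

open DirectSum

section GradedRing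

variable {A : Type} [Ring A] {𝒜 : ℤ → AddSubgroup A} [GradedRing 𝒜]

theorem coe_decompose_mul_of_right_mem_sub {i : ℤ} {b : A} (hb : b ∈ 𝒜 i) (a : A) (n : ℤ) :
    (decompose 𝒜 (a * b) n : A) = decompose 𝒜 a (n - i) * b := by
  have h := coe_decompose_mul_add_of_right_mem 𝒜 (a := a) (i := n - i) hb
  rwa [sub_add_cancel] at h

end GradedRing

section GradedMonoid

variable {A : Type} [Ring A] {𝒜 : ℤ → AddSubgroup A}

theorem units_zpow_mem_graded [SetLike.GradedMonoid 𝒜] {u : Aˣ} {e : ℤ} (hu : (u : A) ∈ 𝒜 e)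
    (hu' : (↑u⁻¹ : A) ∈ 𝒜 (-e)) (k : ℤ) : ((u ^ k : Aˣ) : A) ∈ 𝒜 (k * e) := by
  induction k using Int.induction_on with
  | zero => simpa using SetLike.one_mem_graded 𝒜
  | succ k ih =>
    rw [zpow_add_one, Units.val_mul, add_mul, one_mul]
    exact SetLike.mul_mem_graded ih hu
  | pred k ih =>
    rw [zpow_sub_one, Units.val_mul, sub_mul, one_mul, sub_eq_add_neg]
    exact SetLike.mul_mem_graded ih hu'

-- `x * w = ±1` is idempotent, hence equal to `1`.
theorem IsGradedComm.mul_eq_one_of_mul_eq_one (hcomm : IsGradedComm 𝒜) {i j : ℤ} {x w : A}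
    (hx : x ∈ 𝒜 i) (hw : w ∈ 𝒜 j) (hwx : w * x = 1) : x * w = 1 := by
  have hsign : x * w = ((Int.negOnePow (i * j) : ℤ)) • (1 : A) := by
    rw [hcomm i j x w hx hw, hwx]
  have hidem : x * w * (x * w) = x * w := by
    rw [mul_assoc, ← mul_assoc w, hwx, one_mul]
  rcases Int.units_eq_one_or (Int.negOnePow (i * j)) with hs | hs
  · simpa [hs] using hsign
  · simp only [hsign, hs, Units.val_neg, Units.val_one, neg_smul, one_smul, mul_neg, mul_one,
      neg_neg] at hidem
    rw [hsign, hs, Units.val_neg, Units.val_one, neg_smul, one_smul, ← hidem]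

theorem IsGradedComm.two_eq_zero_of_odd (hcomm : IsGradedComm 𝒜) {i : ℤ} (hi : Odd i)
    {x y : A} (hx : x ∈ 𝒜 i) (hxy : x * y = 1) : (2 : A) = 0 := by
  have hsq : x * x = -(x * x) := by
    simpa [Int.negOnePow_odd _ (hi.mul hi)] using hcomm i i x x hx hx
  have hxxyy : x * x * (y * y) = 1 := by
    rw [mul_assoc, ← mul_assoc x y, hxy, one_mul, hxy]
  have hone : (1 : A) = -1 := by
    rw [← hxxyy]
    nth_rw 1 [hsq]
    rw [neg_mul]
  rw [← one_add_one_eq_two]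
  nth_rw 2 [hone]
  exact add_neg_cancel 1

end GradedMonoid

structure IsGradedDivisionSubring {A : Type} [Ring A] (𝒜 : ℤ → AddSubgroup A) [GradedRing 𝒜]
    (R : Subring A) : Prop where
  decompose_mem : ∀ x ∈ R, ∀ n, (decompose 𝒜 x n : A) ∈ R
  exists_inv : ∀ {i : ℤ}, ∀ x ∈ 𝒜 i, x ∈ R → x ≠ 0 →
    ∃ y ∈ 𝒜 (-i), y ∈ R ∧ x * y = 1 ∧ y * x = 1

namespace IsDGRing

variable {A : Type} [Ring A] {𝒜 : ℤ → AddSubgroup A} [GradedRing 𝒜] {d : A →+ A}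

theorem d_one (hd : IsDGRing 𝒜 d) : d 1 = 0 := (cyclesSubring 𝒜 d hd).one_mem

theorem d_decompose (hd : IsDGRing 𝒜 d) (x : A) (n : ℤ) :
    d (decompose 𝒜 x n) = decompose 𝒜 (d x) (n + 1) := by
  induction x using DirectSum.Decomposition.inductionOn 𝒜 with
  | zero => simp
  | @homogeneous j y =>
    obtain ⟨y, hy⟩ := y
    by_cases hjn : j = n
    · subst hjn
      rw [decompose_of_mem_same 𝒜 hy, decompose_of_mem_same 𝒜 (hd.d_mem j y hy)]
    · rw [decompose_of_mem_ne 𝒜 hy hjn,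
        decompose_of_mem_ne 𝒜 (hd.d_mem j y hy) (by omega), map_zero]
  | add x x' hx hx' =>
    simp only [map_add, decompose_add, DirectSum.add_apply, AddSubgroup.coe_add, hx, hx']

theorem decompose_mem_cyclesSubring (hd : IsDGRing 𝒜 d) {x : A}
    (hx : x ∈ cyclesSubring 𝒜 d hd) (n : ℤ) : (decompose 𝒜 x n : A) ∈ cyclesSubring 𝒜 d hd := by
  change d _ = 0
  rw [hd.d_decompose, show d x = 0 from hx, decompose_zero]
  rfl

theorem isDGLeftIdeal_range_mulRight (hd : IsDGRing 𝒜 d) {i : ℤ} {x : A} (hx : x ∈ 𝒜 i)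
    (hdx : d x = 0) : IsDGLeftIdeal 𝒜 d (AddMonoidHom.mulRight x).range := by
  refine ⟨?_, ?_, ?_⟩
  · rintro a _ ⟨b, rfl⟩
    exact ⟨a * b, mul_assoc a b x⟩
  · rintro _ ⟨b, rfl⟩
    exact ⟨d b, by simp [hd.leibniz_total, hdx]⟩
  · rintro _ ⟨b, rfl⟩ n
    exact ⟨_, (coe_decompose_mul_of_right_mem_sub hx b n).symm⟩

theorem exists_inv_of_d_eq_zero (hd : IsDGRing 𝒜 d) (hcomm : IsGradedComm 𝒜)
    (hleft : ∀ I, IsDGLeftIdeal 𝒜 d I → I = ⊥ ∨ I = ⊤) {i : ℤ} {x : A} (hx : x ∈ 𝒜 i)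
    (hdx : d x = 0) (hx0 : x ≠ 0) : ∃ y ∈ 𝒜 (-i), d y = 0 ∧ x * y = 1 ∧ y * x = 1 := by
  obtain ⟨v, hv⟩ : ∃ v, v * x = 1 := by
    rcases hleft _ (hd.isDGLeftIdeal_range_mulRight hx hdx) with h | h
    · exact absurd ((AddSubgroup.mem_bot).mp (h ▸ ⟨1, one_mul x⟩)) hx0
    · exact (h ▸ AddSubgroup.mem_top 1 : (1 : A) ∈ (AddMonoidHom.mulRight x).range)
  set w : A := ↑(decompose 𝒜 v (0 - i))
  have hwx : w * x = 1 := by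
    rw [← coe_decompose_mul_of_right_mem_sub hx, hv,
      decompose_of_mem_same 𝒜 (SetLike.one_mem_graded 𝒜)]
  have hxw : x * w = 1 := hcomm.mul_eq_one_of_mul_eq_one hx (SetLike.coe_mem _) hwx
  have hdwx : d w * x = 0 := by
    simpa [hd.leibniz_total, hdx, hd.d_one] using congrArg d hwx
  refine ⟨w, by simpa using (decompose 𝒜 v (0 - i)).2, ?_, hxw, hwx⟩
  rw [← mul_one (d w), ← hxw, ← mul_assoc, hdwx, zero_mul]

theorem isGradedDivisionSubring_cyclesSubring (hd : IsDGRing 𝒜 d) (hcomm : IsGradedComm 𝒜)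
    (hleft : ∀ I, IsDGLeftIdeal 𝒜 d I → I = ⊥ ∨ I = ⊤) :
    IsGradedDivisionSubring 𝒜 (cyclesSubring 𝒜 d hd) where
  decompose_mem _ hx n := hd.decompose_mem_cyclesSubring hx n
  exists_inv _ hx hdx hx0 := hd.exists_inv_of_d_eq_zero hcomm hleft hx hdx hx0

end IsDGRing

section LaurentEval

variable {A : Type} [Ring A] {K : Type} [Ring K]

noncomputable def laurentEval (φ : K →+* A) (u : Aˣ) (hφu : ∀ c, Commute (φ c) u) :
    LaurentPolynomial K →+* A :=
  AddMonoidAlgebra.liftNCRingHom φ ((Units.coeHom A).comp (zpowersHom Aˣ u))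
    fun c _ => (hφu c).units_zpow_right _

theorem laurentEval_C_mul_T (φ : K →+* A) (u : Aˣ) (hφu : ∀ c, Commute (φ c) u) (c : K)
    (k : ℤ) :
    laurentEval φ u hφu (LaurentPolynomial.C c * LaurentPolynomial.T k) = φ c * ↑(u ^ k) := by
  rw [← LaurentPolynomial.single_eq_C_mul_T]
  exact AddMonoidAlgebra.liftNCRingHom_single _ _ _ _ _

theorem laurentEval_mem {φ : K →+* A} {u : Aˣ} {hφu : ∀ c, Commute (φ c) u} {S : Subring A}
    (hφ : ∀ c, φ c ∈ S) (hu : ∀ k : ℤ, (↑(u ^ k) : A) ∈ S) (p : LaurentPolynomial K) :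
    laurentEval φ u hφu p ∈ S := by
  induction p using LaurentPolynomial.induction_on' with
  | add p q hp hq => exact (map_add (laurentEval φ u hφu) p q).symm ▸ S.add_mem hp hq
  | C_mul_T k c =>
    rw [laurentEval_C_mul_T]
    exact S.mul_mem (hφ c) (hu k)

end LaurentEval

theorem mem_lpGrading_of_coeff {K : Type} [CommRing K] {e n : ℤ} {p : LaurentPolynomial K}
    (h : ∀ k, p.coeff k ≠ 0 → k * e = n) : p ∈ lpGrading K e n := by
  rw [← AddMonoidAlgebra.sum_coeff_single p, Finsupp.sum]
  exact AddSubgroup.sum_mem _ fun k hk => AddSubgroup.subset_closure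
    ⟨p.coeff k, k, h k (Finsupp.mem_support_iff.mp hk), LaurentPolynomial.single_eq_C_mul_T _ _⟩

section LaurentEvalGraded

variable {A : Type} [Ring A] {𝒜 : ℤ → AddSubgroup A} [GradedRing 𝒜] {K : Type} [CommRing K]
  {φ : K →+* A} {u : Aˣ} {hφu : ∀ c, Commute (φ c) u} {e : ℤ}

theorem laurentEval_mem_graded (hφ : ∀ c, φ c ∈ 𝒜 0)
    (hu : ∀ k : ℤ, (↑(u ^ k) : A) ∈ 𝒜 (k * e)) {n : ℤ} {p : LaurentPolynomial K}
    (hp : p ∈ lpGrading K e n) : laurentEval φ u hφu p ∈ 𝒜 n := by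
  refine (AddSubgroup.closure_le ((𝒜 n).comap (laurentEval φ u hφu).toAddMonoidHom)).mpr ?_ hp
  rintro _ ⟨c, k, rfl, rfl⟩
  simpa [laurentEval_C_mul_T] using SetLike.mul_mem_graded (hφ c) (hu k)

theorem coe_decompose_laurentEval (hφ : ∀ c, φ c ∈ 𝒜 0)
    (hu : ∀ k : ℤ, (↑(u ^ k) : A) ∈ 𝒜 (k * e)) (he : e ≠ 0) (p : LaurentPolynomial K) (k : ℤ) :
    (decompose 𝒜 (laurentEval φ u hφu p) (k * e) : A) = φ (p.coeff k) * ↑(u ^ k) := by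
  induction p using LaurentPolynomial.induction_on' with
  | add p q hp hq =>
    simp only [map_add, decompose_add, DirectSum.add_apply, AddSubgroup.coe_add, hp, hq,
      AddMonoidAlgebra.coeff_add, Finsupp.add_apply, add_mul]
  | C_mul_T j c =>
    have hmem : φ c * ↑(u ^ j) ∈ 𝒜 (j * e) := by
      simpa using SetLike.mul_mem_graded (hφ c) (hu j)
    rw [laurentEval_C_mul_T, ← LaurentPolynomial.single_eq_C_mul_T,
      AddMonoidAlgebra.coeff_single]
    by_cases hjk : j = k
    · subst hjk
      rw [decompose_of_mem_same 𝒜 hmem, Finsupp.single_eq_same]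
    · rw [decompose_of_mem_ne 𝒜 hmem fun h => hjk (mul_right_cancel₀ he h),
        Finsupp.single_eq_of_ne' hjk, map_zero, zero_mul]

theorem laurentEval_injective (hφ : ∀ c, φ c ∈ 𝒜 0)
    (hu : ∀ k : ℤ, (↑(u ^ k) : A) ∈ 𝒜 (k * e)) (he : e ≠ 0) (hφinj : Function.Injective φ) :
    Function.Injective (laurentEval φ u hφu) := by
  refine (injective_iff_map_eq_zero _).mpr fun p hp => LaurentPolynomial.ext fun k => ?_
  have hk := coe_decompose_laurentEval (𝒜 := 𝒜) (hφu := hφu) hφ hu he p k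
  rw [hp, decompose_zero, DirectSum.zero_apply, ZeroMemClass.coe_zero, eq_comm,
    Units.mul_left_eq_zero, map_eq_zero_iff φ hφinj] at hk
  simp [hk]

theorem laurentEval_mem_graded_iff (hφ : ∀ c, φ c ∈ 𝒜 0)
    (hu : ∀ k : ℤ, (↑(u ^ k) : A) ∈ 𝒜 (k * e)) (he : e ≠ 0) (hφinj : Function.Injective φ)
    {n : ℤ} {p : LaurentPolynomial K} :
    laurentEval φ u hφu p ∈ 𝒜 n ↔ p ∈ lpGrading K e n := by
  refine ⟨fun hp => mem_lpGrading_of_coeff fun k hk => ?_, laurentEval_mem_graded hφ hu⟩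
  by_contra hkn
  have hdec := coe_decompose_laurentEval (hφu := hφu) hφ hu he p k
  rw [decompose_of_mem_ne 𝒜 hp (Ne.symm hkn), eq_comm, Units.mul_left_eq_zero,
    map_eq_zero_iff φ hφinj] at hdec
  exact hk hdec

end LaurentEvalGraded

namespace IsGradedDivisionSubring

variable {A : Type} [Ring A] {𝒜 : ℤ → AddSubgroup A} [GradedRing 𝒜] {R : Subring A}

theorem mem_of_forall_homogeneous (hR : IsGradedDivisionSubring 𝒜 R) {σ : Type}
    [SetLike σ A] [AddSubgroupClass σ A] {S : σ} (hS : ∀ n, ∀ x ∈ 𝒜 n, x ∈ R → x ≠ 0 → x ∈ S)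
    {x : A} (hx : x ∈ R) : x ∈ S := by
  classical
  rw [← sum_support_decompose 𝒜 x]
  refine sum_mem fun n hn => hS n _ (SetLike.coe_mem _) (hR.decompose_mem x hx n) ?_
  simpa using DFinsupp.mem_support_iff.mp hn

def degrees [Nontrivial A] (hR : IsGradedDivisionSubring 𝒜 R) : AddSubgroup ℤ where
  carrier := {n | ∃ x ∈ 𝒜 n, x ∈ R ∧ x ≠ 0}
  zero_mem' := ⟨1, SetLike.one_mem_graded 𝒜, R.one_mem, one_ne_zero⟩
  add_mem' := by
    rintro m n ⟨x, hx, hxR, hx0⟩ ⟨y, hy, hyR, hy0⟩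
    obtain ⟨x', -, -, -, hx'x⟩ := hR.exists_inv x hx hxR hx0
    refine ⟨x * y, SetLike.mul_mem_graded hx hy, R.mul_mem hxR hyR, fun hxy => hy0 ?_⟩
    rw [← one_mul y, ← hx'x, mul_assoc, hxy, mul_zero]
  neg_mem' := by
    rintro n ⟨x, hx, hxR, hx0⟩
    obtain ⟨y, hy, hyR, hxy, -⟩ := hR.exists_inv x hx hxR hx0
    exact ⟨y, hy, hyR, right_ne_zero_of_mul_eq_one hxy⟩

theorem mem_zero_of_degrees_eq_bot [Nontrivial A] (hR : IsGradedDivisionSubring 𝒜 R)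
    (h : hR.degrees = ⊥) {x : A} (hx : x ∈ R) : x ∈ 𝒜 0 := by
  refine hR.mem_of_forall_homogeneous (fun n y hy hyR hy0 => ?_) hx
  have hn : n ∈ hR.degrees := ⟨y, hy, hyR, hy0⟩
  rw [h, AddSubgroup.mem_bot] at hn
  exact hn ▸ hy

theorem isField_inf_gradeZero [Nontrivial A] (hR : IsGradedDivisionSubring 𝒜 R)
    (hcomm : IsGradedComm 𝒜) : IsField ↥(R ⊓ SetLike.GradeZero.subring 𝒜) where
  exists_pair_ne := ⟨0, 1, fun h => zero_ne_one (congrArg Subtype.val h)⟩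
  mul_comm a b := Subtype.ext (by simpa using hcomm 0 0 a b a.2.2 b.2.2)
  mul_inv_cancel {a} ha := by
    obtain ⟨y, hy, hyR, hay, -⟩ :=
      hR.exists_inv (a : A) a.2.2 a.2.1 fun h => ha (Subtype.ext h)
    rw [neg_zero] at hy
    exact ⟨⟨y, hyR, hy⟩, Subtype.ext hay⟩

theorem exists_units_zpow_mem [Nontrivial A] (hR : IsGradedDivisionSubring 𝒜 R) {e : ℤ}
    (he : e ∈ hR.degrees) :
    ∃ u : Aˣ, (∀ k : ℤ, (↑(u ^ k) : A) ∈ 𝒜 (k * e)) ∧ ∀ k : ℤ, (↑(u ^ k) : A) ∈ R := by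
  obtain ⟨x, hx, hxR, hx0⟩ := he
  obtain ⟨y, hy, hyR, hxy, hyx⟩ := hR.exists_inv x hx hxR hx0
  let v : Rˣ := ⟨⟨x, hxR⟩, ⟨y, hyR⟩, Subtype.ext hxy, Subtype.ext hyx⟩
  refine ⟨Units.map R.subtype.toMonoidHom v, units_zpow_mem_graded hx hy, fun k => ?_⟩
  rw [← map_zpow]
  exact (v ^ k : Rˣ).val.2

theorem mem_range_laurentEval [Nontrivial A] (hR : IsGradedDivisionSubring 𝒜 R) {e : ℤ}
    (hdeg : ∀ n ∈ hR.degrees, ∃ k : ℤ, k * e = n) {u : Aˣ}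
    (hu : ∀ k : ℤ, (↑(u ^ k) : A) ∈ 𝒜 (k * e)) (huR : ∀ k : ℤ, (↑(u ^ k) : A) ∈ R)
    (hFu : ∀ c : ↥(R ⊓ SetLike.GradeZero.subring 𝒜), Commute (Subring.subtype _ c) u)
    {z : A} (hz : z ∈ R) : z ∈ (laurentEval _ u hFu).range := by
  refine hR.mem_of_forall_homogeneous (σ := Subring A) (fun n a ha haR ha0 => ?_) hz
  obtain ⟨k, rfl⟩ := hdeg n ⟨a, ha, haR, ha0⟩
  have hc : a * ↑(u ^ (-k)) ∈ R ⊓ SetLike.GradeZero.subring 𝒜 :=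
    ⟨R.mul_mem haR (huR _), (by simpa using SetLike.mul_mem_graded ha (hu (-k)) :
      a * ↑(u ^ (-k)) ∈ 𝒜 0)⟩
  refine ⟨LaurentPolynomial.C ⟨_, hc⟩ * LaurentPolynomial.T k, ?_⟩
  rw [laurentEval_C_mul_T, Subring.coe_subtype, mul_assoc, ← Units.val_mul, ← zpow_add,
    neg_add_cancel, zpow_zero, Units.val_one, mul_one]

theorem exists_ringEquiv_laurentPolynomial [Nontrivial A] (hR : IsGradedDivisionSubring 𝒜 R)
    (hcomm : IsGradedComm 𝒜) {e : ℤ} (he0 : e ≠ 0) (he : hR.degrees = AddSubgroup.closure {e}) :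
    ∃ (F : Type) (_ : Field F), ((2 : F) ≠ 0 → Even e) ∧
      ∃ θ : R ≃+* LaurentPolynomial F,
        ∀ (n : ℤ) (x : R), (x : A) ∈ 𝒜 n ↔ θ x ∈ lpGrading F e n := by
  have hdeg : ∀ n, n ∈ hR.degrees ↔ ∃ k : ℤ, k * e = n := by
    simp [he, AddSubgroup.mem_closure_singleton]
  obtain ⟨u, hu, huR⟩ := hR.exists_units_zpow_mem ((hdeg e).2 ⟨1, one_mul e⟩)
  have hue : (u : A) ∈ 𝒜 e := by simpa using hu 1
  set F := R ⊓ SetLike.GradeZero.subring 𝒜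
  let _ : Field F := (hR.isField_inf_gradeZero hcomm).toField
  have hF0 : ∀ c : F, F.subtype c ∈ 𝒜 0 := fun c => c.2.2
  have hFu : ∀ c : F, Commute (F.subtype c) u := fun c =>
    (by simpa using hcomm 0 e c u (hF0 c) hue : (c : A) * u = u * c)
  set ψ := laurentEval F.subtype u hFu
  have hψ_inj : Function.Injective ψ :=
    laurentEval_injective hF0 hu he0 Subtype.val_injective
  let θ := RingEquiv.ofBijective (ψ.codRestrict R (laurentEval_mem (fun c => c.2.1) huR))
    ⟨fun p q h => hψ_inj (congrArg Subtype.val h), fun z => by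
      obtain ⟨p, hp⟩ := hR.mem_range_laurentEval (fun n => (hdeg n).1) hu huR hFu z.2
      exact ⟨p, Subtype.ext hp⟩⟩
  refine ⟨F, inferInstance, fun h2 => ?_, θ.symm, fun n z => ?_⟩
  · by_contra hodd
    have h2A : (2 : A) = 0 :=
      hcomm.two_eq_zero_of_odd (Int.not_even_iff_odd.mp hodd) hue u.mul_inv
    exact h2 (Subtype.ext (by rw [ZeroMemClass.coe_zero, ← h2A]; rfl))
  · rw [← laurentEval_mem_graded_iff (hφu := hFu) hF0 hu he0 Subtype.val_injective,
      show ψ (θ.symm z) = z from congrArg Subtype.val (θ.apply_symm_apply z)]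

theorem subset_gradeZero_or_exists_ringEquiv_laurentPolynomial [Nontrivial A]
    (hR : IsGradedDivisionSubring 𝒜 R) (hcomm : IsGradedComm 𝒜) :
    (∀ x ∈ R, x ∈ 𝒜 0) ∨
      ∃ (F : Type) (_ : Field F) (e : ℤ), e ≠ 0 ∧ ((2 : F) ≠ 0 → Even e) ∧
        ∃ θ : R ≃+* LaurentPolynomial F,
          ∀ (n : ℤ) (x : R), (x : A) ∈ 𝒜 n ↔ θ x ∈ lpGrading F e n := by
  obtain ⟨e, he⟩ := Int.subgroup_cyclic hR.degrees
  by_cases he0 : e = 0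
  · subst he0
    exact Or.inl fun _ hx => hR.mem_zero_of_degrees_eq_bot (by simp [he]) hx
  · obtain ⟨F, _, h2, θ, hθ⟩ := hR.exists_ringEquiv_laurentPolynomial hcomm he0 he
    exact Or.inr ⟨F, _, e, he0, h2, θ, hθ⟩

end IsGradedDivisionSubring

theorem cycles_of_gradedComm_dgDivision_classification_general
    {A : Type} [Ring A] (𝒜 : ℤ → AddSubgroup A) [GradedRing 𝒜] (dA : A →+ A)
    (hA : IsDGRing 𝒜 dA)
    (hcomm : IsGradedComm 𝒜) (hdiv : IsDGDivisionRing 𝒜 dA) :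
    ((∀ x, dA x = 0 → x ∈ 𝒜 0) ∧
      (∀ x y, dA x = 0 → dA y = 0 → x * y = y * x) ∧
      (∀ x, dA x = 0 → x ≠ 0 → ∃ y, dA y = 0 ∧ x * y = 1 ∧ y * x = 1)) ∨
    (∃ (F : Type) (_ : Field F) (e : ℤ), e ≠ 0 ∧ ((2 : F) ≠ 0 → Even e) ∧
      ∃ θ : cyclesSubring 𝒜 dA hA ≃+* LaurentPolynomial F,
        ∀ (n : ℤ) (x : cyclesSubring 𝒜 dA hA),
          (x : A) ∈ 𝒜 n ↔ θ x ∈ lpGrading F e n) := by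
  have : Nontrivial A := ⟨⟨0, 1, hdiv.1⟩⟩
  have hR := hA.isGradedDivisionSubring_cyclesSubring hcomm hdiv.2.1
  refine (hR.subset_gradeZero_or_exists_ringEquiv_laurentPolynomial hcomm).imp_left
    fun hzero => ⟨hzero, fun x y hx hy => ?_, fun x hx hx0 => ?_⟩
  · simpa using hcomm 0 0 x y (hzero x hx) (hzero y hy)
  · obtain ⟨y, -, hy, hxy, hyx⟩ := hR.exists_inv x (hzero x hx) hx hx0
    exact ⟨y, hy, hxy, hyx⟩

/-- Classification of the cycles of a graded commutative
dg-division algebra (with matching left/right regular homogeneous cycles): `ker d`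
is either a field concentrated in degree `0`, or a Laurent polynomial ring
`K[X,X⁻¹]` over a field `K` with `X` homogeneous of nonzero degree, of even degree
when the characteristic of `K` is not `2`. -/
theorem cycles_of_gradedComm_dgDivision_classification
    {A : Type} [Ring A] (𝒜 : ℤ → AddSubgroup A) [GradedRing 𝒜] (dA : A →+ A)
    (hA : IsDGRing 𝒜 dA)
    (hreg : ∀ (i : ℤ) (x : A), x ∈ 𝒜 i → dA x = 0 →
      ((∀ y, x * y = 0 → y = 0) ↔ (∀ y, y * x = 0 → y = 0)))
    (hcomm : IsGradedComm 𝒜) (hdiv : IsDGDivisionRing 𝒜 dA) :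
    ((∀ x, dA x = 0 → x ∈ 𝒜 0) ∧
      (∀ x y, dA x = 0 → dA y = 0 → x * y = y * x) ∧
      (∀ x, dA x = 0 → x ≠ 0 → ∃ y, dA y = 0 ∧ x * y = 1 ∧ y * x = 1)) ∨
    (∃ (F : Type) (_ : Field F) (e : ℤ), e ≠ 0 ∧ ((2 : F) ≠ 0 → Even e) ∧
      ∃ θ : cyclesSubring 𝒜 dA hA ≃+* LaurentPolynomial F,
        ∀ (n : ℤ) (x : cyclesSubring 𝒜 dA hA),
          (x : A) ∈ 𝒜 n ↔ θ x ∈ lpGrading F e n) :=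
  cycles_of_gradedComm_dgDivision_classification_general 𝒜 dA hA hcomm hdiv
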